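/- Let B be a finite-dimensional vector space over a field K of characteristic zero regarded as an abelian Lie algebra, and let w₁, w₂ : B × B → B* be nondegenerate cyclic skew-symmetric bilinear maps, with associated trilinear forms φ_{w₁}(x,y,z) = w₁(x,y)(z) and φ_{w₂}(x,y,z) = w₂(x,y)(z). Then the T*-extensions (T*_{w₁}B, q_B) and (T*_{w₂}B, q_B) are isometrically isomorphic if and only if there exists an invertible linear map σ : B → B such that φ_{w₁}(x,y,z) = φ_{w₂}(σ(x), σ(y), σ(z)) for all x,y,z ∈ B. -/

import Mathlib

open Module

variable {K B : Type*}

/-- The T*-extension bracket of an abelian Lie algebra: `[b+β, b'+β'] = w(b,b')`. -/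
def abelBr [Field K] [AddCommGroup B] [Module K B]
    (w : B →ₗ[K] B →ₗ[K] Module.Dual K B)
    (X Y : B × Module.Dual K B) : B × Module.Dual K B :=
  ((0 : B), w X.1 Y.1)

/-- The hyperbolic form `q_B(b+β, b'+β') = β(b') + β'(b)`. -/
def hypForm [Field K] [AddCommGroup B] [Module K B]
    (X Y : B × Module.Dual K B) : K :=
  X.2 Y.1 + Y.2 X.1

/-!
An equivalence `σ` of trilinear forms induces the isometry `σ × (σ⁻¹)*` of the T*-extensions.
Conversely, let `g` be an isometric isomorphism. Since `w₂` is nondegenerate, the centre of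
`T*_{w₂}B` is `B*`, and `g` maps `B*` into it. The `B`-component `σ` of `g` restricted to `B` is
then dual, via `q_B`, to `g` restricted to `B*`, hence injective; and comparing the brackets of
two elements of `B` gives `w₁(x,y)(z) = w₂(σx,σy)(σz)`.
-/

section TStarExtension

variable [Field K] [AddCommGroup B] [Module K B] {w₁ w₂ : B →ₗ[K] B →ₗ[K] Dual K B}

theorem prodCongr_dualMap_abelBr {σ : B ≃ₗ[K] B}
    (hσ : ∀ x y z : B, w₁ x y z = w₂ (σ x) (σ y) (σ z)) (X Y : B × Dual K B) :
    σ.prodCongr σ.symm.dualMap (abelBr w₁ X Y) =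
      abelBr w₂ (σ.prodCongr σ.symm.dualMap X) (σ.prodCongr σ.symm.dualMap Y) := by
  refine Prod.ext (map_zero σ) (LinearMap.ext fun z => ?_)
  simp [abelBr, hσ X.1 Y.1 (σ.symm z)]

theorem hypForm_prodCongr_dualMap (σ : B ≃ₗ[K] B) (X Y : B × Dual K B) :
    hypForm (σ.prodCongr σ.symm.dualMap X) (σ.prodCongr σ.symm.dualMap Y) = hypForm X Y := by
  simp [hypForm]

def baseBlock (g : (B × Dual K B) ≃ₗ[K] (B × Dual K B)) : B →ₗ[K] B :=
  LinearMap.fst K B (Dual K B) ∘ₗ g.toLinearMap ∘ₗ LinearMap.inl K B (Dual K B)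

theorem baseBlock_apply (g : (B × Dual K B) ≃ₗ[K] (B × Dual K B)) (b : B) :
    baseBlock g b = (g (b, 0)).1 :=
  rfl

variable {g : (B × Dual K B) ≃ₗ[K] (B × Dual K B)}

theorem fst_map_inr_eq_zero (hnd₂ : ∀ b : B, (∀ b' : B, w₂ b b' = 0) → b = 0)
    (hbr : ∀ X Y, g (abelBr w₁ X Y) = abelBr w₂ (g X) (g Y)) (β : Dual K B) :
    (g (0, β)).1 = 0 := by
  refine hnd₂ _ fun b' => ?_
  have h := congrArg Prod.snd (hbr (0, β) (g.symm (b', 0)))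
  simpa [abelBr, Prod.mk_zero_zero] using h.symm

theorem snd_map_inr_apply_baseBlock (hnd₂ : ∀ b : B, (∀ b' : B, w₂ b b' = 0) → b = 0)
    (hbr : ∀ X Y, g (abelBr w₁ X Y) = abelBr w₂ (g X) (g Y))
    (hq : ∀ X Y, hypForm (g X) (g Y) = hypForm X Y) (β : Dual K B) (y : B) :
    (g (0, β)).2 (baseBlock g y) = β y := by
  have h := hq (0, β) (y, 0)
  simpa [hypForm, baseBlock_apply, fst_map_inr_eq_zero hnd₂ hbr β] using h

theorem baseBlock_injective (hnd₂ : ∀ b : B, (∀ b' : B, w₂ b b' = 0) → b = 0)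
    (hbr : ∀ X Y, g (abelBr w₁ X Y) = abelBr w₂ (g X) (g Y))
    (hq : ∀ X Y, hypForm (g X) (g Y) = hypForm X Y) :
    Function.Injective (baseBlock g) := by
  refine (injective_iff_map_eq_zero _).2 fun y hy => ?_
  refine (forall_dual_apply_eq_zero_iff K y).1 fun β => ?_
  rw [← snd_map_inr_apply_baseBlock hnd₂ hbr hq β y, hy, map_zero]

theorem snd_map_inr_apply (hbr : ∀ X Y, g (abelBr w₁ X Y) = abelBr w₂ (g X) (g Y))
    (x y : B) : (g (0, w₁ x y)).2 = w₂ (baseBlock g x) (baseBlock g y) :=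
  congrArg Prod.snd (hbr (x, 0) (y, 0))

theorem apply_eq_apply_baseBlock (hnd₂ : ∀ b : B, (∀ b' : B, w₂ b b' = 0) → b = 0)
    (hbr : ∀ X Y, g (abelBr w₁ X Y) = abelBr w₂ (g X) (g Y))
    (hq : ∀ X Y, hypForm (g X) (g Y) = hypForm X Y) (x y z : B) :
    w₁ x y z = w₂ (baseBlock g x) (baseBlock g y) (baseBlock g z) := by
  rw [← snd_map_inr_apply hbr, snd_map_inr_apply_baseBlock hnd₂ hbr hq]

end TStarExtension

theorem stmt18_general [Field K] [AddCommGroup B] [Module K B] [FiniteDimensional K B]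
    (w₁ w₂ : B →ₗ[K] B →ₗ[K] Module.Dual K B)
    (hnd₂ : ∀ b : B, (∀ b' : B, w₂ b b' = 0) → b = 0) :
    (∃ g : (B × Module.Dual K B) ≃ₗ[K] (B × Module.Dual K B),
      (∀ X Y : B × Module.Dual K B, g (abelBr w₁ X Y) = abelBr w₂ (g X) (g Y)) ∧
      (∀ X Y : B × Module.Dual K B, hypForm (g X) (g Y) = hypForm X Y))
    ↔
    (∃ σ : B ≃ₗ[K] B, ∀ x y z : B, w₁ x y z = w₂ (σ x) (σ y) (σ z)) := by
  constructor
  · rintro ⟨g, hbr, hq⟩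
    exact ⟨.ofInjectiveEndo _ (baseBlock_injective hnd₂ hbr hq),
      apply_eq_apply_baseBlock hnd₂ hbr hq⟩
  · rintro ⟨σ, hσ⟩
    exact ⟨σ.prodCongr σ.symm.dualMap, prodCongr_dualMap_abelBr hσ, hypForm_prodCongr_dualMap σ⟩

/-- For `B` an abelian Lie algebra and `w₁, w₂` nondegenerate cyclic skew-symmetric
bilinear maps, the T*-extensions `(T*_{w₁}B, q_B)` and `(T*_{w₂}B, q_B)` are
isometrically isomorphic iff the associated trilinear forms are equivalent under
some `σ ∈ GL(B)`. -/
theorem stmt18 [Field K] [CharZero K] [AddCommGroup B] [Module K B] [FiniteDimensional K B]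
    (w₁ w₂ : B →ₗ[K] B →ₗ[K] Module.Dual K B)
    (hcyc₁ : ∀ a b c : B, w₁ a b c = w₁ c a b ∧ w₁ c a b = w₁ b c a)
    (hskew₁ : ∀ a b : B, w₁ a b = - w₁ b a)
    (hnd₁ : ∀ b : B, (∀ b' : B, w₁ b b' = 0) → b = 0)
    (hcyc₂ : ∀ a b c : B, w₂ a b c = w₂ c a b ∧ w₂ c a b = w₂ b c a)
    (hskew₂ : ∀ a b : B, w₂ a b = - w₂ b a)
    (hnd₂ : ∀ b : B, (∀ b' : B, w₂ b b' = 0) → b = 0) :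
    (∃ g : (B × Module.Dual K B) ≃ₗ[K] (B × Module.Dual K B),
      (∀ X Y : B × Module.Dual K B, g (abelBr w₁ X Y) = abelBr w₂ (g X) (g Y)) ∧
      (∀ X Y : B × Module.Dual K B, hypForm (g X) (g Y) = hypForm X Y))
    ↔
    (∃ σ : B ≃ₗ[K] B, ∀ x y z : B, w₁ x y z = w₂ (σ x) (σ y) (σ z)) :=
  stmt18_general w₁ w₂ hnd₂
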